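/- (Theorem 3.3, upper bound) Let σ > 0 and δ > 0, set r = δ/σ, and let p_z be the standardized two-component Gaussian mixture density p_z(v) = (N(v;−δ̂,σ̂) + N(v;δ̂,σ̂))/2 with δ̂ = δ/√(σ²+δ²), σ̂ = σ/√(σ²+δ²). Then the Kullback–Leibler divergence from the standard normal density satisfies KL(p_z ‖ N(·;0,1)) ≤ (1/2) ln(1 + r²). -/

import Mathlib

open Real MeasureTheory

/-- The univariate Gaussian density `N(v; μ, σ) = (1/(σ√(2π))) exp(−(v−μ)²/(2σ²))`. -/
noncomputable def gauss (μ σ : ℝ) (v : ℝ) : ℝ :=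
  (1 / (σ * Real.sqrt (2 * π))) * Real.exp (-((v - μ) ^ 2) / (2 * σ ^ 2))

/-- The KL divergence `KL(p‖q) = ∫ p(v) ln(p(v)/q(v)) dv` of densities on ℝ. -/
noncomputable def klDiv (p q : ℝ → ℝ) : ℝ :=
  ∫ v : ℝ, p v * Real.log (p v / q v)

/-!
The divergence of `N(μ, s²)` from `N(0, 1)` is `−ln s + (μ² + s² − 1)/2`, computed from the first
two moments of `N(μ, s²)`. Both components `N(±δ̂, σ̂²)` have `δ̂² + σ̂² = 1`, so each is at
divergence `−ln σ̂ = ½ ln(1 + r²)`. Convexity of `x ↦ x ln x` makes `KL(· ‖ q)` convex, so the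
mixture is at divergence at most the average of the two.
-/

open ProbabilityTheory
open scoped NNReal

namespace ProbabilityTheory

variable (μ : ℝ) (v : ℝ≥0)

lemma integrable_id_gaussianReal : Integrable (fun x ↦ x) (gaussianReal μ v) :=
  (memLp_id_gaussianReal 1).integrable le_rfl

lemma integrable_sq_gaussianReal : Integrable (fun x ↦ x ^ 2) (gaussianReal μ v) :=
  (memLp_id_gaussianReal 2).integrable_sq

lemma integral_sq_gaussianReal : ∫ x, x ^ 2 ∂gaussianReal μ v = μ ^ 2 + v := by
  have h := variance_eq_sub (memLp_id_gaussianReal (μ := μ) (v := v) 2)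
  simp only [variance_id_gaussianReal, Pi.pow_apply, id, integral_id_gaussianReal] at h
  linarith

lemma integrable_quadratic_gaussianReal (a b c : ℝ) :
    Integrable (fun x ↦ a + b * x + c * x ^ 2) (gaussianReal μ v) :=
  ((integrable_const a).add ((integrable_id_gaussianReal μ v).const_mul b)).add
    ((integrable_sq_gaussianReal μ v).const_mul c)

lemma integral_quadratic_gaussianReal (a b c : ℝ) :
    ∫ x, a + b * x + c * x ^ 2 ∂gaussianReal μ v = a + b * μ + c * (μ ^ 2 + v) := by
  have h₁ := integrable_id_gaussianReal μ v
  have h₂ := integrable_sq_gaussianReal μ v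
  rw [integral_add (f := fun x ↦ a + b * x) ((integrable_const a).add (h₁.const_mul b))
      (h₂.const_mul c), integral_add (integrable_const a) (h₁.const_mul b),
    integral_const_mul, integral_const_mul, integral_id_gaussianReal, integral_sq_gaussianReal]
  simp

variable {v}

lemma integrable_gaussianPDFReal_smul_iff (hv : v ≠ 0) {f : ℝ → ℝ} :
    Integrable (fun x ↦ gaussianPDFReal μ v x • f x) ↔ Integrable f (gaussianReal μ v) := by
  rw [gaussianReal_of_var_ne_zero _ hv, integrable_withDensity_iff_integrable_smul'
    (measurable_gaussianPDF μ v) (ae_of_all _ fun _ ↦ gaussianPDF_lt_top)]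
  simp [toReal_gaussianPDF]

end ProbabilityTheory

lemma sub_le_mul_log_div {x c : ℝ} (hx : 0 ≤ x) (hc : 0 < c) : x - c ≤ x * log (x / c) := by
  rcases hx.eq_or_lt with rfl | hx
  · simpa using hc.le
  calc x - c = x * (1 - (x / c)⁻¹) := by field_simp
    _ ≤ x * log (x / c) := by gcongr; exact one_sub_inv_le_log_of_pos (by positivity)

lemma mul_log_div_convex_comb_le {a b x y c : ℝ} (ha : 0 ≤ a) (hb : 0 ≤ b) (hab : a + b = 1)
    (hx : 0 ≤ x) (hy : 0 ≤ y) (hc : 0 < c) :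
    (a * x + b * y) * log ((a * x + b * y) / c) ≤
      a * (x * log (x / c)) + b * (y * log (y / c)) := by
  have hconv := convexOn_mul_log.2 (Set.mem_Ici.2 (div_nonneg hx hc.le))
    (Set.mem_Ici.2 (div_nonneg hy hc.le)) ha hb hab
  simp only [smul_eq_mul] at hconv
  have hscale : ∀ z, z * log (z / c) = c * (z / c * log (z / c)) := fun z ↦ by field_simp
  rw [hscale, hscale x, hscale y, show (a * x + b * y) / c = a * (x / c) + b * (y / c) by ring]
  nlinarith

theorem klDiv_convex_comb_le {p₁ p₂ q : ℝ → ℝ} {a b : ℝ} (ha : 0 ≤ a) (hb : 0 ≤ b)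
    (hab : a + b = 1) (hp₁ : ∀ v, 0 ≤ p₁ v) (hp₂ : ∀ v, 0 ≤ p₂ v) (hq : ∀ v, 0 < q v)
    (hp₁m : Measurable p₁) (hp₂m : Measurable p₂) (hqm : Measurable q)
    (hp₁i : Integrable p₁) (hp₂i : Integrable p₂) (hqi : Integrable q)
    (h₁ : Integrable fun v ↦ p₁ v * log (p₁ v / q v))
    (h₂ : Integrable fun v ↦ p₂ v * log (p₂ v / q v)) :
    klDiv (fun v ↦ a * p₁ v + b * p₂ v) q ≤ a * klDiv p₁ q + b * klDiv p₂ q := by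
  have hp v : 0 ≤ a * p₁ v + b * p₂ v := by have := hp₁ v; have := hp₂ v; positivity
  have hupper v := mul_log_div_convex_comb_le ha hb hab (hp₁ v) (hp₂ v) (hq v)
  have hint : Integrable fun v ↦ (a * p₁ v + b * p₂ v) * log ((a * p₁ v + b * p₂ v) / q v) :=
    integrable_of_le_of_le (by fun_prop) (ae_of_all _ fun v ↦ sub_le_mul_log_div (hp v) (hq v))
      (ae_of_all _ hupper) (((hp₁i.const_mul a).add (hp₂i.const_mul b)).sub hqi)
      ((h₁.const_mul a).add (h₂.const_mul b))
  rw [klDiv, klDiv, klDiv, ← integral_const_mul, ← integral_const_mul,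
    ← integral_add (h₁.const_mul a) (h₂.const_mul b)]
  exact integral_mono hint ((h₁.const_mul a).add (h₂.const_mul b)) hupper

lemma gauss_eq_gaussianPDFReal (μ : ℝ) {s : ℝ} (hs : 0 < s) :
    gauss μ s = gaussianPDFReal μ (s ^ 2).toNNReal := by
  ext x
  rw [gauss, gaussianPDFReal, Real.coe_toNNReal _ (sq_nonneg s), mul_comm (2 * π),
    sqrt_mul (sq_nonneg s), sqrt_sq hs.le, one_div]

lemma gauss_pos (μ : ℝ) {s : ℝ} (hs : 0 < s) (x : ℝ) : 0 < gauss μ s x := by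
  rw [gauss_eq_gaussianPDFReal μ hs]
  exact gaussianPDFReal_pos _ _ _ (by simpa using hs.ne')

lemma measurable_gauss (μ s : ℝ) : Measurable (gauss μ s) := by
  unfold gauss
  fun_prop

lemma integrable_gauss (μ : ℝ) {s : ℝ} (hs : 0 < s) : Integrable (gauss μ s) := by
  rw [gauss_eq_gaussianPDFReal μ hs]
  exact integrable_gaussianPDFReal _ _

lemma log_gauss_div_gauss_zero_one (μ : ℝ) {s : ℝ} (hs : 0 < s) (x : ℝ) :
    log (gauss μ s x / gauss 0 1 x) =
      (-log s - μ ^ 2 / (2 * s ^ 2)) + μ / s ^ 2 * x + (1 - 1 / s ^ 2) / 2 * x ^ 2 := by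
  have hratio : gauss μ s x / gauss 0 1 x =
      s⁻¹ * exp (-((x - μ) ^ 2) / (2 * s ^ 2) + x ^ 2 / 2) := by
    rw [gauss, gauss, mul_div_mul_comm, ← exp_sub]
    have : 0 < √(2 * π) := by positivity
    congr 1
    · field_simp
    · ring_nf
  rw [hratio, log_mul (inv_ne_zero hs.ne') (exp_ne_zero _), log_inv, log_exp]
  field_simp
  ring

lemma gauss_mul_log_div_gauss_zero_one (μ : ℝ) {s : ℝ} (hs : 0 < s) :
    (fun x ↦ gauss μ s x * log (gauss μ s x / gauss 0 1 x)) =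
      fun x ↦ gaussianPDFReal μ (s ^ 2).toNNReal x •
        ((-log s - μ ^ 2 / (2 * s ^ 2)) + μ / s ^ 2 * x + (1 - 1 / s ^ 2) / 2 * x ^ 2) := by
  ext x
  rw [log_gauss_div_gauss_zero_one μ hs, gauss_eq_gaussianPDFReal μ hs, smul_eq_mul]

lemma integrable_gauss_mul_log_div_gauss_zero_one (μ : ℝ) {s : ℝ} (hs : 0 < s) :
    Integrable (fun x ↦ gauss μ s x * log (gauss μ s x / gauss 0 1 x)) := by
  rw [gauss_mul_log_div_gauss_zero_one μ hs,
    integrable_gaussianPDFReal_smul_iff _ (by simpa using hs.ne')]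
  exact integrable_quadratic_gaussianReal _ _ _ _ _

lemma klDiv_gauss_gauss_zero_one (μ : ℝ) {s : ℝ} (hs : 0 < s) :
    klDiv (gauss μ s) (gauss 0 1) = -log s + (μ ^ 2 + s ^ 2 - 1) / 2 := by
  rw [klDiv, gauss_mul_log_div_gauss_zero_one μ hs,
    ← integral_gaussianReal_eq_integral_smul (by simpa using hs.ne'),
    integral_quadratic_gaussianReal, Real.coe_toNNReal _ (sq_nonneg s)]
  field_simp
  ring

lemma neg_log_div_sqrt_sq_add_sq {σ : ℝ} (hσ : 0 < σ) (δ : ℝ) :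
    -log (σ / √(σ ^ 2 + δ ^ 2)) = 1 / 2 * log (1 + (δ / σ) ^ 2) := by
  have hsum : 0 < σ ^ 2 + δ ^ 2 := by positivity
  rw [log_div hσ.ne' (sqrt_pos.2 hsum).ne', log_sqrt hsum.le,
    show 1 + (δ / σ) ^ 2 = (σ ^ 2 + δ ^ 2) / σ ^ 2 by field_simp,
    log_div hsum.ne' (by positivity), log_pow]
  push_cast
  ring

theorem klDiv_standardized_mixture_upper_general (σ δ : ℝ) (hσ : 0 < σ)
    (r δhat σhat : ℝ) (hr : r = δ / σ)
    (hδhat : δhat = δ / Real.sqrt (σ ^ 2 + δ ^ 2))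
    (hσhat : σhat = σ / Real.sqrt (σ ^ 2 + δ ^ 2)) :
    klDiv (fun v => (gauss (-δhat) σhat v + gauss δhat σhat v) / 2) (gauss 0 1) ≤
      (1 / 2) * Real.log (1 + r ^ 2) := by
  have hsum : 0 < σ ^ 2 + δ ^ 2 := by positivity
  have hσhat_pos : 0 < σhat := by rw [hσhat]; positivity
  have hunit : δhat ^ 2 + σhat ^ 2 = 1 := by
    rw [hσhat, hδhat, div_pow, div_pow, sq_sqrt hsum.le]
    field_simp
    ring
  have hkl μ (hμ : μ ^ 2 = δhat ^ 2) : klDiv (gauss μ σhat) (gauss 0 1) = -log σhat := by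
    rw [klDiv_gauss_gauss_zero_one μ hσhat_pos, hμ, hunit]
    ring
  have hmix : (fun v ↦ (gauss (-δhat) σhat v + gauss δhat σhat v) / 2) =
      fun v ↦ 1 / 2 * gauss (-δhat) σhat v + 1 / 2 * gauss δhat σhat v := by
    ext v; ring
  rw [hmix, hr, ← neg_log_div_sqrt_sq_add_sq hσ, ← hσhat]
  calc _ ≤ 1 / 2 * klDiv (gauss (-δhat) σhat) (gauss 0 1) +
        1 / 2 * klDiv (gauss δhat σhat) (gauss 0 1) :=
      klDiv_convex_comb_le (by norm_num) (by norm_num) (by norm_num)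
        (fun v ↦ (gauss_pos _ hσhat_pos v).le) (fun v ↦ (gauss_pos _ hσhat_pos v).le)
        (gauss_pos 0 one_pos) (measurable_gauss _ _) (measurable_gauss _ _) (measurable_gauss _ _)
        (integrable_gauss _ hσhat_pos) (integrable_gauss _ hσhat_pos) (integrable_gauss _ one_pos)
        (integrable_gauss_mul_log_div_gauss_zero_one _ hσhat_pos)
        (integrable_gauss_mul_log_div_gauss_zero_one _ hσhat_pos)
    _ = -log σhat := by rw [hkl _ (neg_sq δhat), hkl _ rfl]; ring

/-- Theorem 3.3, upper bound: for the standardized two-component Gaussian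
mixture `p_z(v) = (N(v;−δ̂,σ̂) + N(v;δ̂,σ̂))/2` with `r = δ/σ`,
`KL(p_z ‖ N(·;0,1)) ≤ (1/2) ln(1 + r²)`. -/
theorem klDiv_standardized_mixture_upper (σ δ : ℝ) (hσ : 0 < σ) (hδ : 0 < δ)
    (r δhat σhat : ℝ) (hr : r = δ / σ)
    (hδhat : δhat = δ / Real.sqrt (σ ^ 2 + δ ^ 2))
    (hσhat : σhat = σ / Real.sqrt (σ ^ 2 + δ ^ 2)) :
    klDiv (fun v => (gauss (-δhat) σhat v + gauss δhat σhat v) / 2) (gauss 0 1) ≤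
      (1 / 2) * Real.log (1 + r ^ 2) :=
  klDiv_standardized_mixture_upper_general σ δ hσ r δhat σhat hr hδhat hσhat
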